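/- arXiv:1402.7258 — 3 statements merged into one kernel-verified Lean document; each statement's English description precedes it below -/
import Mathlib

section
/- Let X, Y be jointly Gaussian random vectors with Y = H X + N, where X ~ CN(0, I_{n_T}) and N ~ CN(0, N₀ I_{n_R}) independent. Then the conditional mutual information chain-rule telescoping holds with memory K: Σ_{k=1}^{n_T} I(Y; X_k | X_{k-1},...,X_{max(1,k-K)}) = log det(I + G/N₀) - Σ_{k=1}^{n_T-K} log det(I + G_{[k,k+K]}/N₀) + Σ_{k=2}^{n_T-K} log det(I + G_{[k,k+K-1]}/N₀), where G = H^H H and G_{[a,b]} = H̄_{[a,b]}^H H̄_{[a,b]} with H̄_{[a,b]} being H with columns a..b deleted. -/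
open Matrix

/-! Writing `g a b` for `h(Y | X_a, …, X_{b-1})`, each summand is `g (k-K) k - g (k-K) (k+1)`, so
the sum telescopes along each row `a` of column blocks, leaving the full Gram term `g 0 0`, the
blocks `[k-1, k+K)` with a minus sign and the blocks `[k-1, k+K-1)` with a plus sign. Sylvester's
identity `det (1 + AB) = det (1 + BA)` turns the column-side determinants `det (I + G/N₀)` of the
statement into the row-side ones defining `h`, and `H̄ H̄ᴴ` only depends on the set of deleted
columns. -/

def colDel {nR nT : ℕ} (H : Matrix (Fin nR) (Fin nT) ℂ) (a b : ℕ) :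
    Matrix (Fin nR) {j : Fin nT // j.val + 1 < a ∨ b < j.val + 1} ℂ :=
  H.submatrix id Subtype.val

def delCols {nR nT : ℕ} (H : Matrix (Fin nR) (Fin nT) ℂ) (A : Finset (Fin nT)) :
    Matrix (Fin nR) {j : Fin nT // j ∉ A} ℂ :=
  H.submatrix id Subtype.val

noncomputable def hYgiven {nR nT : ℕ} (H : Matrix (Fin nR) (Fin nT) ℂ) (N0 : ℝ)
    (A : Finset (Fin nT)) : ℝ :=
  Real.log ((1 + (N0 : ℂ)⁻¹ • (delCols H A * (delCols H A)ᴴ)).det.re)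

noncomputable def condMI {nR nT : ℕ} (H : Matrix (Fin nR) (Fin nT) ℂ) (N0 : ℝ)
    (k : Fin nT) (A : Finset (Fin nT)) : ℝ :=
  hYgiven H N0 A - hYgiven H N0 (insert k A)

open Finset

section Gram

variable {m n R : Type*} [Fintype n] [CommRing R]

lemma det_one_add_smul_mul_comm [Fintype m] [DecidableEq m] [DecidableEq n]
    (A : Matrix m n R) (B : Matrix n m R) (c : R) :
    det (1 + c • (A * B)) = det (1 + c • (B * A)) := by
  rw [← Matrix.smul_mul, det_one_add_mul_comm, Matrix.mul_smul]

variable [StarRing R] (M : Matrix m n R)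

lemma submatrix_subtype_mul_conjTranspose_congr {p q : n → Prop} [DecidablePred p]
    [DecidablePred q] (h : ∀ j, p j ↔ q j) :
    M.submatrix id (Subtype.val : {j // p j} → n) *
        (M.submatrix id (Subtype.val : {j // p j} → n))ᴴ =
      M.submatrix id (Subtype.val : {j // q j} → n) *
        (M.submatrix id (Subtype.val : {j // q j} → n))ᴴ := by
  ext i i'
  exact Fintype.sum_equiv (Equiv.subtypeEquivRight h) _ _ fun _ => rfl

lemma submatrix_subtype_mul_conjTranspose_of_forall {p : n → Prop} [DecidablePred p]
    (h : ∀ j, p j) :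
    M.submatrix id (Subtype.val : {j // p j} → n) *
      (M.submatrix id (Subtype.val : {j // p j} → n))ᴴ = M * Mᴴ := by
  ext i i'
  exact Fintype.sum_equiv (Equiv.subtypeUnivEquiv h) _ _ fun _ => rfl

end Gram

-- 0-based columns `a, …, b - 1`, whereas `colDel H a b` deletes the 1-based columns `a, …, b`.
def colRange (n a b : ℕ) : Finset (Fin n) :=
  univ.filter fun j => a ≤ j.val ∧ j.val < b

lemma insert_colRange {n a : ℕ} (k : Fin n) (hak : a ≤ k) :
    insert k (colRange n a k) = colRange n a (k + 1) := by
  ext j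
  simp only [colRange, mem_insert, mem_filter, mem_univ, true_and, Fin.ext_iff]
  omega

section Channel

variable {nR nT : ℕ} (H : Matrix (Fin nR) (Fin nT) ℂ) (N0 : ℝ)

lemma log_det_gram_eq_hYgiven_colRange_zero :
    Real.log (det (1 + (N0 : ℂ)⁻¹ • (Hᴴ * H))).re = hYgiven H N0 (colRange nT 0 0) := by
  rw [hYgiven, delCols, submatrix_subtype_mul_conjTranspose_of_forall H (by simp [colRange]),
    det_one_add_smul_mul_comm]

lemma log_det_gram_colDel (a b : ℕ) :
    Real.log (det (1 + (N0 : ℂ)⁻¹ • ((colDel H a b)ᴴ * colDel H a b))).re =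
      hYgiven H N0 (colRange nT (a - 1) b) := by
  rw [hYgiven, delCols, colDel, det_one_add_smul_mul_comm,
    submatrix_subtype_mul_conjTranspose_congr H (q := (· ∉ colRange nT (a - 1) b))
      fun j => by simp [colRange]; omega]

end Channel

lemma sum_range_sub_window_telescope {M : Type*} [AddCommGroup M] (g : ℕ → ℕ → M) {n K : ℕ}
    (hK : K < n) :
    ∑ k ∈ range n, (g (k - K) k - g (k - K) (k + 1)) =
      g 0 0 - ∑ k ∈ Icc 1 (n - K), g (k - 1) (k + K) +
        ∑ k ∈ Icc 2 (n - K), g (k - 1) (k + K - 1) := by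
  induction n, hK using Nat.le_induction with
  | base =>
    have hrow : ∀ k ∈ range (K + 1), g (k - K) k - g (k - K) (k + 1) = g 0 k - g 0 (k + 1) :=
      fun k hk => by rw [Nat.sub_eq_zero_of_le (Nat.lt_succ_iff.mp (mem_range.mp hk))]
    rw [sum_congr rfl hrow, sum_range_sub']
    simp [add_comm]
  | succ n hKn ih =>
    rw [sum_range_succ, ih, show n + 1 - K = n - K + 1 by omega,
      sum_Icc_succ_top (by omega), sum_Icc_succ_top (by omega),
      show n - K + 1 - 1 = n - K by omega, show n - K + 1 + K = n + 1 by omega,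
      show n + 1 - 1 = n by omega]
    abel

theorem stmt6_general (nR nT K : ℕ) (hK : K < nT)
    (H : Matrix (Fin nR) (Fin nT) ℂ) (N0 : ℝ) :
    (∑ k : Fin nT, condMI H N0 k
        (Finset.univ.filter fun j : Fin nT => k.val - K ≤ j.val ∧ j.val < k.val)) =
      Real.log ((1 + (N0 : ℂ)⁻¹ • (Hᴴ * H)).det.re)
        - ∑ k ∈ Finset.Icc 1 (nT - K),
            Real.log ((1 + (N0 : ℂ)⁻¹ • ((colDel H k (k + K))ᴴ * colDel H k (k + K))).det.re)
        + ∑ k ∈ Finset.Icc 2 (nT - K),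
            Real.log ((1 + (N0 : ℂ)⁻¹ •
              ((colDel H k (k + K - 1))ᴴ * colDel H k (k + K - 1))).det.re) := by
  change (∑ k : Fin nT, condMI H N0 k (colRange nT (k - K) k)) = _
  simp_rw [condMI, insert_colRange _ (Nat.sub_le _ _), log_det_gram_colDel,
    log_det_gram_eq_hYgiven_colRange_zero]
  exact (Fin.sum_univ_eq_sum_range (fun k => hYgiven H N0 (colRange nT (k - K) k) -
    hYgiven H N0 (colRange nT (k - K) (k + 1))) nT).trans
      (sum_range_sub_window_telescope (fun a b => hYgiven H N0 (colRange nT a b)) hK)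

/-- Theorem 2 + Corollary 3 of the paper: for `Y = HX + N` with
`X ~ CN(0, I_{n_T})` and `N ~ CN(0, N₀ I_{n_R})` independent,
`Σ_{k=1}^{n_T} I(Y; X_k | X_{k-1},…,X_{max(1,k-K)})
 = log det(I+G/N₀) - Σ_{k=1}^{n_T-K} log det(I+G_{[k,k+K]}/N₀)
   + Σ_{k=2}^{n_T-K} log det(I+G_{[k,k+K-1]}/N₀)`,
where `G = Hᴴ H` and `G_{[a,b]} = H̄_{[a,b]}ᴴ H̄_{[a,b]}`.
(The left-hand sum is indexed 0-based over `k : Fin n_T`; the conditioning set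
`{j : k-K ≤ j < k}` is the 0-based version of `X_{k-1},…,X_{max(1,k-K)}`.) -/
theorem stmt6 (nR nT K : ℕ) (hK : K < nT)
    (H : Matrix (Fin nR) (Fin nT) ℂ) (N0 : ℝ) (hN0 : 0 < N0) :
    (∑ k : Fin nT, condMI H N0 k
        (Finset.univ.filter fun j : Fin nT => k.val - K ≤ j.val ∧ j.val < k.val)) =
      Real.log ((1 + (N0 : ℂ)⁻¹ • (Hᴴ * H)).det.re)
        - ∑ k ∈ Finset.Icc 1 (nT - K),
            Real.log ((1 + (N0 : ℂ)⁻¹ • ((colDel H k (k + K))ᴴ * colDel H k (k + K))).det.re)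
        + ∑ k ∈ Finset.Icc 2 (nT - K),
            Real.log ((1 + (N0 : ℂ)⁻¹ •
              ((colDel H k (k + K - 1))ᴴ * colDel H k (k + K - 1))).det.re) :=
  stmt6_general nR nT K hK H N0
end

section
/- Let C be an n×n positive definite Hermitian matrix and let U D U^H = R^{-1} be a UDU factorization where U is upper unit-triangular with bandwidth K (nonzero only on the main diagonal and first K superdiagonals) and D = diag(d_1,...,d_n) with d_k = det(C^{k-K}_{k-1})/det(C^{k-K}_k) for k > K. Then det(R^{-1}) = (1/det(C^1_K)) · Π_{k=K+1}^{n} det(C^{k-K}_{k-1})/det(C^{k-K}_k), where C^i_j is the principal submatrix of C on indices i..j (with det of empty matrix equal to 1 and d_1,...,d_K the diagonal of the D-factor in a UDL factorization of (C^1_K)^{-1}). -/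
open Matrix
open scoped ComplexOrder

/-- The principal submatrix of `C` on the `L` consecutive indices starting at `a`
(0-based); junk value `0` outside the valid range. -/
def psub {n : ℕ} (C : Matrix (Fin n) (Fin n) ℂ) (a L : ℕ) : Matrix (Fin L) (Fin L) ℂ :=
  fun i j =>
    if h : a + i.val < n ∧ a + j.val < n then C ⟨a + i.val, h.1⟩ ⟨a + j.val, h.2⟩ else 0

theorem Matrix.det_mul_mul_conjTranspose_of_unitUpperTriangular {R ι : Type*} [CommRing R]
    [StarRing R] [Fintype ι] [DecidableEq ι] [LinearOrder ι] {U : Matrix ι ι R}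
    (hU : U.BlockTriangular id) (hU1 : ∀ i, U i i = 1) (D : Matrix ι ι R) :
    (U * D * Uᴴ).det = D.det := by
  have hUdet : U.det = 1 := by
    rw [det_of_isUpperTriangular hU]
    exact Finset.prod_eq_one fun i _ => hU1 i
  rw [det_mul, det_mul, det_conjTranspose, hUdet, star_one, one_mul, mul_one]

theorem stmt10_general (n K : ℕ)
    (C U D : Matrix (Fin n) (Fin n) ℂ)
    (d : Fin n → ℂ) (hD : D = Matrix.diagonal d)
    (hU1 : ∀ i : Fin n, U i i = 1)
    (hUlow : ∀ i j : Fin n, j.val < i.val → U i j = 0)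
    (hd : ∀ k : Fin n, K ≤ k.val →
      d k = (psub C (k.val - K) K).det / (psub C (k.val - K) (K + 1)).det)
    (hdprod : (∏ k ∈ Finset.univ.filter (fun k : Fin n => k.val < K), d k)
      = ((psub C 0 K).det)⁻¹) :
    (U * D * Uᴴ).det = ((psub C 0 K).det)⁻¹ *
      ∏ k ∈ Finset.univ.filter (fun k : Fin n => K ≤ k.val),
        (psub C (k.val - K) K).det / (psub C (k.val - K) (K + 1)).det := by
  rw [det_mul_mul_conjTranspose_of_unitUpperTriangular (fun i j hij => hUlow i j hij) hU1,
    hD, det_diagonal, ← Finset.prod_filter_mul_prod_filter_not Finset.univ (fun k => k.val < K),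
    hdprod]
  simp only [not_lt]
  exact congrArg _ (Finset.prod_congr rfl fun k hk => hd k (Finset.mem_filter.mp hk).2)

/-- let `C` be positive definite, `U` unit upper triangular with bandwidth
`K`, and `D = diag(d₁,…,dₙ)` with `d_k = det(C^{k-K}_{k-1})/det(C^{k-K}_k)` for `k > K`
(1-based; here 0-based `K ≤ k`) and `Π_{k=1}^K d_k = 1/det(C¹_K)` (the diagonal of the
D-factor of a UDL factorization of `(C¹_K)⁻¹`).  Then for `R⁻¹ = U D Uᴴ`,
`det(R⁻¹) = (1/det(C¹_K)) Π_{k=K+1}^n det(C^{k-K}_{k-1})/det(C^{k-K}_k)`. -/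
theorem stmt10 (n K : ℕ) (hK : K < n)
    (C U D : Matrix (Fin n) (Fin n) ℂ) (hC : C.PosDef)
    (d : Fin n → ℂ) (hD : D = Matrix.diagonal d)
    (hU1 : ∀ i : Fin n, U i i = 1)
    (hUlow : ∀ i j : Fin n, j.val < i.val → U i j = 0)
    (hUband : ∀ i j : Fin n, i.val + K < j.val → U i j = 0)
    (hd : ∀ k : Fin n, K ≤ k.val →
      d k = (psub C (k.val - K) K).det / (psub C (k.val - K) (K + 1)).det)
    (hdprod : (∏ k ∈ Finset.univ.filter (fun k : Fin n => k.val < K), d k)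
      = ((psub C 0 K).det)⁻¹) :
    (U * D * Uᴴ).det = ((psub C 0 K).det)⁻¹ *
      ∏ k ∈ Finset.univ.filter (fun k : Fin n => K ≤ k.val),
        (psub C (k.val - K) K).det / (psub C (k.val - K) (K + 1)).det :=
  stmt10_general n K C U D d hD hU1 hUlow hd hdprod
end

section
/- For integers n_R ≥ n_T ≥ 1, the high-SNR power offset difference between channel shortening with memory K (with n_R ≥ n_T, S_∞ = n_T) and full detection is L_∞^CS - L_∞^full = (1/n_T)[Σ_{ℓ=0}^{n_T-K-1} ψ(n_R - ℓ) - (n_T - K)·ψ(n_R - n_T + K + 1)], where ψ(j) = Σ_{k=1}^{j-1} 1/k - γ is the digamma function at positive integers, given that J(r, t) = log₂(e) Σ_{ℓ=0}^{t-1} ψ(r - ℓ) and L_∞^CS = log(n_T) - [J(n_R,n_T) - (n_T-K)J(n_R,n_T-K-1) + (n_T-K-1)J(n_R,n_T-K)]/n_T, L_∞^full = log(n_T) - J(n_R,n_T)/n_T. -/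
open Finset in
theorem Finset.succ_mul_sum_range_sub_mul_sum_range_succ {R : Type*} [CommRing R]
    (f : ℕ → R) (m : ℕ) :
    (m + 1 : R) * ∑ i ∈ range m, f i - m * ∑ i ∈ range (m + 1), f i
      = ∑ i ∈ range (m + 1), f i - (m + 1 : R) * f m := by
  rw [sum_range_succ]
  ring

theorem stmt17_general (nT nR K : ℕ) (h1 : nT ≤ nR) (h2 : K < nT)
    (ψ : ℕ → ℝ)
    (J : ℕ → ℕ → ℝ) (hJ : ∀ r t, J r t = ∑ ℓ ∈ Finset.range t, ψ (r - ℓ))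
    (Lcs Lfull : ℝ)
    (hLcs : Lcs = Real.log nT -
      (J nR nT - ((nT - K : ℕ) : ℝ) * J nR (nT - K - 1)
        + ((nT - K - 1 : ℕ) : ℝ) * J nR (nT - K)) / nT)
    (hLfull : Lfull = Real.log nT - J nR nT / nT) :
    Lcs - Lfull = (1 / (nT : ℝ)) *
      ((∑ ℓ ∈ Finset.range (nT - K), ψ (nR - ℓ))
        - ((nT - K : ℕ) : ℝ) * ψ (nR - nT + K + 1)) := by
  obtain ⟨m, hm⟩ : ∃ m, nT - K = m + 1 := ⟨nT - K - 1, by omega⟩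
  have hlast : nR - nT + K + 1 = nR - m := by omega
  rw [hLcs, hLfull, hm, hlast, Nat.add_sub_cancel, hJ nR m, hJ nR (m + 1)]
  push_cast
  linear_combination (1 / (nT : ℝ)) *
    Finset.succ_mul_sum_range_sub_mul_sum_range_succ (fun ℓ => ψ (nR - ℓ)) m

/-- high-SNR power-offset difference between channel shortening with memory
`K` and full detection, for `n_R ≥ n_T` (so `S_∞ = n_T`):
`L_∞^CS - L_∞^full = (1/n_T)[Σ_{ℓ=0}^{n_T-K-1} ψ(n_R-ℓ) - (n_T-K) ψ(n_R-n_T+K+1)]`,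
where `ψ(j) = Σ_{k=1}^{j-1} 1/k - γ` is the digamma function at positive integers,
`J(r,t) = Σ_{ℓ=0}^{t-1} ψ(r-ℓ)` (the `log₂ e` normalization ignored consistently),
`L_∞^CS = log n_T - [J(n_R,n_T) - (n_T-K)J(n_R,n_T-K-1) + (n_T-K-1)J(n_R,n_T-K)]/n_T`,
and `L_∞^full = log n_T - J(n_R,n_T)/n_T`. -/
theorem stmt17 (nT nR K : ℕ) (γ : ℝ) (h1 : nT ≤ nR) (h2 : K < nT) (h3 : 0 < nT)
    (ψ : ℕ → ℝ) (hψ : ∀ j, ψ j = (∑ k ∈ Finset.Icc 1 (j - 1), (1 : ℝ) / k) - γ)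
    (J : ℕ → ℕ → ℝ) (hJ : ∀ r t, J r t = ∑ ℓ ∈ Finset.range t, ψ (r - ℓ))
    (Lcs Lfull : ℝ)
    (hLcs : Lcs = Real.log nT -
      (J nR nT - ((nT - K : ℕ) : ℝ) * J nR (nT - K - 1)
        + ((nT - K - 1 : ℕ) : ℝ) * J nR (nT - K)) / nT)
    (hLfull : Lfull = Real.log nT - J nR nT / nT) :
    Lcs - Lfull = (1 / (nT : ℝ)) *
      ((∑ ℓ ∈ Finset.range (nT - K), ψ (nR - ℓ))
        - ((nT - K : ℕ) : ℝ) * ψ (nR - nT + K + 1)) :=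
  stmt17_general nT nR K h1 h2 ψ J hJ Lcs Lfull hLcs hLfull
end
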